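/- Let f be a symmetric norm on ℝ^n and let ‖·‖_f be the induced unitarily invariant norm on B(H). The following are equivalent: (i) ‖·‖_f is submultiplicative, i.e., ‖AB‖_f ≤ ‖A‖_f · ‖B‖_f for all A, B ∈ B(H); (ii) ‖A‖_f ≥ s_1(A) for all A ∈ B(H); (iii) there exist unit vectors x, y ∈ H such that ‖x y*‖_f ≥ 1; (iv) f(e_1) ≥ 1. -/

import Mathlib

open scoped InnerProductSpace Pointwise

variable {H : Type*} [NormedAddCommGroup H] [InnerProductSpace ℂ H] [CompleteSpace H]

/-- The `k`-th singular value (1-indexed) of a bounded operator `A`: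
`s_k(A) = inf {‖A - X‖ : rank X < k}`. -/
noncomputable def sval (k : ℕ) (A : H →L[ℂ] H) : ℝ :=
  sInf { r : ℝ | ∃ X : H →L[ℂ] H,
    Module.rank ℂ (LinearMap.range (X : H →ₗ[ℂ] H)) < (k : Cardinal) ∧ r = ‖A - X‖ }

/-- `f : ℝ^n → ℝ` is a symmetric norm: a norm invariant under permutations of the
coordinates and under sign changes of the coordinates. -/
structure IsSymmetricNorm (n : ℕ) (f : (Fin n → ℝ) → ℝ) : Prop where
  triangle : ∀ x y, f (x + y) ≤ f x + f y
  homog : ∀ (t : ℝ) (x), f (t • x) = |t| * f x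
  definite : ∀ x, x ≠ 0 → 0 < f x
  perm_invariant : ∀ (σ : Equiv.Perm (Fin n)) (x), f (fun i => x (σ i)) = f x
  sign_invariant : ∀ (ε : Fin n → ℝ), (∀ i, ε i = 1 ∨ ε i = -1) →
    ∀ x, f (fun i => ε i * x i) = f x

/-- The unitarily invariant norm induced by a symmetric norm `f` on `ℝ^n`:
`‖A‖_f = f (s_1(A), …, s_n(A))`. -/
noncomputable def normf (n : ℕ) (f : (Fin n → ℝ) → ℝ) (A : H →L[ℂ] H) : ℝ :=
  f (fun j : Fin n => sval (j.1 + 1) A)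

/-- The rank-one operator `x y* : z ↦ ⟨z, y⟩ x` (inner product linear in `z`). -/
noncomputable def rankOne (x y : H) : H →L[ℂ] H :=
  (innerSL ℂ y).smulRight x

/-!
For unit vectors `x, y` the operator `x y*` has `s₁ = 1` and `sₖ = 0` for `k ≥ 2`, so
`‖x y*‖_f = f(e₁)`. Symmetric norms are monotone in the absolute values of the coordinates,
which gives `‖A‖ f(e₁) ≤ ‖A‖_f` and, since `sₖ(AB) ≤ ‖A‖ sₖ(B)`, also `‖AB‖_f ≤ ‖A‖ ‖B‖_f`.
Hence `f(e₁) ≥ 1` implies (i)–(iii); conversely each of them, tested on the rank-one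
projection `u u*`, forces `f(e₁) ≥ 1`.
-/

namespace IsSymmetricNorm

variable {n : ℕ} {f : (Fin n → ℝ) → ℝ}

lemma nonneg (hf : IsSymmetricNorm n f) (x : Fin n → ℝ) : 0 ≤ f x := by
  have hneg : f (-x) = f x := by simpa using hf.homog (-1) x
  have hzero : f 0 = 0 := by simpa using hf.homog 0 0
  have := hf.triangle x (-x)
  rw [add_neg_cancel, hzero, hneg] at this
  linarith

lemma apply_single (hf : IsSymmetricNorm n f) (i : Fin n) (t : ℝ) :
    f (Pi.single i t) = |t| * f (Pi.single i 1) := by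
  rw [← hf.homog, ← Pi.single_smul, smul_eq_mul, mul_one]

lemma apply_update_neg (hf : IsSymmetricNorm n f) (y : Fin n → ℝ) (i : Fin n) :
    f (Function.update y i (-y i)) = f y := by
  convert hf.sign_invariant (Function.update 1 i (-1)) _ y using 2
  · ext j
    rcases eq_or_ne j i with rfl | hj <;> simp [Function.update_of_ne, *]
  · intro j
    rcases eq_or_ne j i with rfl | hj <;> simp [Function.update_of_ne, *]

lemma apply_update_le (hf : IsSymmetricNorm n f) (y : Fin n → ℝ) (i : Fin n) {t : ℝ}
    (ht : |t| ≤ |y i|) : f (Function.update y i t) ≤ f y := by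
  rcases eq_or_ne (y i) 0 with hy | hy
  · rw [hy, abs_zero, abs_nonpos_iff] at ht
    rw [ht, ← hy, Function.update_eq_self]
  -- `update y i t` is a convex combination of `y` and of `y` with the sign of `y i` flipped.
  set s := t / y i
  have hs : |s| ≤ 1 := by rwa [abs_div, div_le_one (abs_pos.mpr hy)]
  obtain ⟨hs₁, hs₂⟩ := abs_le.mp hs
  have hcomb : Function.update y i t =
      ((1 + s) / 2) • y + ((1 - s) / 2) • Function.update y i (-y i) := by
    ext j
    rcases eq_or_ne j i with rfl | hj
    · simp only [Function.update_self, Pi.add_apply, Pi.smul_apply, smul_eq_mul, s]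
      field_simp
      ring
    · simp only [Function.update_of_ne hj, Pi.add_apply, Pi.smul_apply, smul_eq_mul]
      ring
  calc f (Function.update y i t)
      ≤ |(1 + s) / 2| * f y + |(1 - s) / 2| * f (Function.update y i (-y i)) := by
        rw [hcomb, ← hf.homog, ← hf.homog]; exact hf.triangle _ _
    _ = f y := by
        rw [hf.apply_update_neg, abs_of_nonneg (by linarith), abs_of_nonneg (by linarith)]
        ring

lemma mono (hf : IsSymmetricNorm n f) {x y : Fin n → ℝ} (hxy : ∀ i, |x i| ≤ y i) :
    f x ≤ f y := by
  let z : Finset (Fin n) → Fin n → ℝ := fun s i => if i ∈ s then x i else y i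
  suffices h : ∀ s, f (z s) ≤ f y by simpa [z] using h Finset.univ
  intro s
  induction s using Finset.induction_on with
  | empty => simp [z]
  | insert a s ha ih =>
    have hz : z (insert a s) = Function.update (z s) a (x a) := by
      ext j
      rcases eq_or_ne j a with rfl | hj <;> simp [z, Function.update_of_ne, *]
    refine le_trans ?_ ih
    rw [hz]
    refine hf.apply_update_le _ _ ((hxy a).trans (le_abs_self _) |>.trans_eq ?_)
    simp [z, ha]

end IsSymmetricNorm

section

variable {E : Type*} [NormedAddCommGroup E] [InnerProductSpace ℂ E] {n : ℕ}
  {f : (Fin n → ℝ) → ℝ}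

lemma sval_nonneg (k : ℕ) (A : E →L[ℂ] E) : 0 ≤ sval k A :=
  Real.sInf_nonneg (by rintro r ⟨X, _, rfl⟩; positivity)

lemma sval_le_norm_sub {k : ℕ} {A X : E →L[ℂ] E}
    (hX : Module.rank ℂ (LinearMap.range (X : E →ₗ[ℂ] E)) < k) : sval k A ≤ ‖A - X‖ :=
  csInf_le ⟨0, by rintro r ⟨X, _, rfl⟩; positivity⟩ ⟨X, hX, rfl⟩

lemma sval_le_norm {k : ℕ} (hk : 0 < k) (A : E →L[ℂ] E) : sval k A ≤ ‖A‖ := by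
  simpa using sval_le_norm_sub (A := A) (X := 0) (by simpa using hk)

lemma sval_one (A : E →L[ℂ] E) : sval 1 A = ‖A‖ := by
  refine le_antisymm (sval_le_norm one_pos A) (le_csInf ⟨‖A‖, 0, by simp, by simp⟩ ?_)
  rintro r ⟨X, hX, rfl⟩
  have hX0 : X = 0 := by
    rw [Nat.cast_one, Cardinal.lt_one_iff, Submodule.rank_eq_zero,
      LinearMap.range_eq_bot] at hX
    exact ContinuousLinearMap.coe_injective hX
  simp [hX0]

lemma sval_comp_le {k : ℕ} (hk : 0 < k) (A B : E →L[ℂ] E) :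
    sval k (A ∘L B) ≤ ‖A‖ * sval k B := by
  unfold sval
  rw [← smul_eq_mul, ← Real.sInf_smul_of_nonneg (norm_nonneg A)]
  refine le_csInf (Set.Nonempty.smul_set ⟨‖B‖, 0, by simpa using hk, by simp⟩) ?_
  rintro _ ⟨_, ⟨X, hX, rfl⟩, rfl⟩
  have hAX : Module.rank ℂ (LinearMap.range ((A ∘L X : E →L[ℂ] E) : E →ₗ[ℂ] E)) < k :=
    (LinearMap.rank_comp_le_right (X : E →ₗ[ℂ] E) (A : E →ₗ[ℂ] E)).trans_lt hX
  calc sval k (A ∘L B) ≤ ‖A ∘L B - A ∘L X‖ := sval_le_norm_sub hAX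
    _ = ‖A ∘L (B - X)‖ := by rw [ContinuousLinearMap.comp_sub]
    _ ≤ ‖A‖ * ‖B - X‖ := A.opNorm_comp_le (B - X)

lemma norm_rankOne (x y : E) : ‖rankOne x y‖ = ‖y‖ * ‖x‖ := by
  rw [rankOne, ContinuousLinearMap.norm_smulRight_apply, innerSL_apply_norm]

lemma rankOne_comp_self {x : E} (hx : ‖x‖ = 1) : rankOne x x ∘L rankOne x x = rankOne x x := by
  ext z
  simp [rankOne, hx]

lemma rank_range_rankOne_le (x y : E) :
    Module.rank ℂ (LinearMap.range (rankOne x y : E →ₗ[ℂ] E)) ≤ 1 := by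
  have hspan : LinearMap.range (rankOne x y : E →ₗ[ℂ] E) ≤ Submodule.span ℂ {x} := by
    rintro _ ⟨z, rfl⟩
    exact Submodule.smul_mem _ _ (Submodule.mem_span_singleton_self x)
  simpa using (Submodule.rank_mono hspan).trans (rank_span_le (R := ℂ) ({x} : Set E))

lemma sval_rankOne_of_two_le {k : ℕ} (hk : 2 ≤ k) (x y : E) : sval k (rankOne x y) = 0 := by
  refine le_antisymm ?_ (sval_nonneg k _)
  have hrank : Module.rank ℂ (LinearMap.range (rankOne x y : E →ₗ[ℂ] E)) < k :=
    (rank_range_rankOne_le x y).trans_lt (by exact_mod_cast hk)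
  exact (sval_le_norm_sub (A := rankOne x y) hrank).trans_eq (by simp)

lemma exists_norm_eq_one_of_rank (hn : 0 < n) (hdim : (n : Cardinal) ≤ Module.rank ℂ E) :
    ∃ u : E, ‖u‖ = 1 := by
  have : Nontrivial E := rank_pos_iff_nontrivial.mp ((Nat.cast_pos.mpr hn).trans_le hdim)
  exact exists_norm_eq E zero_le_one

lemma normf_nonneg (hf : IsSymmetricNorm n f) (A : E →L[ℂ] E) : 0 ≤ normf n f A :=
  hf.nonneg _

lemma normf_rankOne (hn : 0 < n) {x y : E} (hx : ‖x‖ = 1) (hy : ‖y‖ = 1) :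
    normf n f (rankOne x y) = f (Pi.single ⟨0, hn⟩ 1) := by
  unfold normf
  congr 1
  ext ⟨j, _⟩
  rcases Nat.eq_zero_or_pos j with rfl | hj0
  · simp [sval_one, norm_rankOne, hx, hy]
  · rw [Pi.single_eq_of_ne (Fin.ne_of_val_ne hj0.ne')]
    exact sval_rankOne_of_two_le (Nat.succ_le_succ hj0) x y

lemma norm_mul_le_normf (hn : 0 < n) (hf : IsSymmetricNorm n f) (A : E →L[ℂ] E) :
    ‖A‖ * f (Pi.single ⟨0, hn⟩ 1) ≤ normf n f A := by
  rw [← abs_of_nonneg (norm_nonneg A), ← hf.apply_single, ← sval_one]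
  refine hf.mono fun ⟨j, _⟩ => ?_
  rcases Nat.eq_zero_or_pos j with rfl | hj0
  · simp [abs_of_nonneg (sval_nonneg 1 A)]
  · rw [Pi.single_eq_of_ne (Fin.ne_of_val_ne hj0.ne'), abs_zero]
    exact sval_nonneg _ A

lemma normf_comp_le (hf : IsSymmetricNorm n f) (A B : E →L[ℂ] E) :
    normf n f (A ∘L B) ≤ ‖A‖ * normf n f B := by
  calc normf n f (A ∘L B) ≤ f (‖A‖ • fun j : Fin n => sval (j.1 + 1) B) :=
        hf.mono fun j => by
          rw [abs_of_nonneg (sval_nonneg _ _)]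
          exact sval_comp_le j.1.succ_pos A B
    _ = ‖A‖ * normf n f B := by rw [hf.homog, abs_norm, normf]

end

theorem stmt5 (n : ℕ) (hn : 0 < n) (hdim : (n : Cardinal) ≤ Module.rank ℂ H)
    (f : (Fin n → ℝ) → ℝ) (hf : IsSymmetricNorm n f) :
    ((∀ A B : H →L[ℂ] H, normf n f (A ∘L B) ≤ normf n f A * normf n f B) ↔
        1 ≤ f (Pi.single (⟨0, hn⟩ : Fin n) 1 : Fin n → ℝ)) ∧
    ((∀ A : H →L[ℂ] H, sval 1 A ≤ normf n f A) ↔ 1 ≤ f (Pi.single (⟨0, hn⟩ : Fin n) 1 : Fin n → ℝ)) ∧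
    ((∃ x y : H, ‖x‖ = 1 ∧ ‖y‖ = 1 ∧ 1 ≤ normf n f (rankOne x y)) ↔
        1 ≤ f (Pi.single (⟨0, hn⟩ : Fin n) 1 : Fin n → ℝ)) := by
  obtain ⟨u, hu⟩ := exists_norm_eq_one_of_rank hn hdim
  have hP : normf n f (rankOne u u) = f (Pi.single ⟨0, hn⟩ 1) := normf_rankOne hn hu hu
  have hP_pos : 0 < f (Pi.single ⟨0, hn⟩ 1) :=
    hf.definite _ (Pi.single_ne_zero_iff.mpr one_ne_zero)
  have norm_le (h : 1 ≤ f (Pi.single ⟨0, hn⟩ 1)) (A : H →L[ℂ] H) : ‖A‖ ≤ normf n f A :=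
    (le_mul_of_one_le_right (norm_nonneg A) h).trans (norm_mul_le_normf hn hf A)
  refine ⟨⟨fun h => ?_, fun h A B => ?_⟩, ⟨fun h => ?_, fun h A => ?_⟩, ⟨?_, fun h => ?_⟩⟩
  · -- `P = u u*` is a nonzero idempotent, so `‖P‖_f ≤ ‖P‖_f ^ 2`.
    have := h (rankOne u u) (rankOne u u)
    rw [rankOne_comp_self hu, hP] at this
    nlinarith
  · exact (normf_comp_le hf A B).trans
      (mul_le_mul_of_nonneg_right (norm_le h A) (normf_nonneg hf B))
  · simpa [sval_one, norm_rankOne, hu, hP] using h (rankOne u u)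
  · exact (sval_one A).trans_le (norm_le h A)
  · rintro ⟨x, y, hx, hy, hxy⟩
    rwa [normf_rankOne hn hx hy] at hxy
  · exact ⟨u, u, hu, hu, hP.symm ▸ h⟩
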